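/- arXiv:2310.04415 — 3 statements merged into one kernel-verified Lean document; each statement's English description precedes it below -/
import Mathlib

section
/- Let ℓ(y, z) = log(1 + exp(−y z)) be the binary cross-entropy loss with label y ∈ {−1, 1}. Then the square of its derivative with respect to z is bounded by the loss itself: (ℓ'(y,z))² ≤ ℓ(y,z) for all z ∈ ℝ. -/
open Real

theorem hasDerivAt_log_one_add_exp_mul (c z : ℝ) :
    HasDerivAt (fun z' => log (1 + exp (c * z')))
      (c * exp (c * z) / (1 + exp (c * z))) z := by
  have hexp : HasDerivAt (fun z' => 1 + exp (c * z')) (exp (c * z) * c) z :=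
    (((hasDerivAt_id z).const_mul c).exp.const_add 1).congr_deriv (by simp)
  convert hexp.log (by positivity) using 1
  ring

theorem sq_div_one_add_le_log_one_add {u : ℝ} (hu : 0 ≤ u) :
    (u / (1 + u)) ^ 2 ≤ log (1 + u) := by
  have hpos : 0 < 1 + u := by linarith
  have ht0 : 0 ≤ u / (1 + u) := by positivity
  have ht1 : u / (1 + u) ≤ 1 := (div_le_one hpos).2 (by linarith)
  calc (u / (1 + u)) ^ 2 ≤ u / (1 + u) := by nlinarith
    _ = 1 - (1 + u)⁻¹ := by field_simp; ring
    _ ≤ log (1 + u) := one_sub_inv_le_log_of_pos hpos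

/-- Self-bounding property of the binary cross-entropy loss
`ℓ(y,z) = log(1 + exp(-y z))` with label `y ∈ {-1, 1}`:
the square of its derivative in `z` is bounded by the loss itself. -/
theorem bce_self_bounding (y : ℝ) (hy : y = -1 ∨ y = 1) (z : ℝ) :
    (deriv (fun z' : ℝ => Real.log (1 + Real.exp (-y * z'))) z) ^ 2 ≤
      Real.log (1 + Real.exp (-y * z)) := by
  have hy2 : y ^ 2 = 1 := by rcases hy with rfl | rfl <;> norm_num
  rw [(hasDerivAt_log_one_add_exp_mul (-y) z).deriv, mul_div_assoc, mul_pow, neg_sq, hy2,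
    one_mul]
  exact sq_div_one_add_le_log_one_add (exp_pos _).le
end

section
/- With the setup of the previous statement, if additionally m ≤ ‖∇_w h(w, x)‖ and there exists c > 0 with (ℓ'(yᵢ, h(w,xᵢ)))² ≥ c ℓ(yᵢ, h(w,xᵢ)) for all i, then E[‖g(w)‖²] ≥ c m² L(w) − ‖∇_w L(w)‖². -/
/-!
The noise `g(w) = ℓ'ᵢ ∇h(w, xᵢ) - ∇L(w)` has mean zero over the sample, so its second moment is
the second moment of the per-sample gradients `aᵢ = ℓ'ᵢ ∇h(w, xᵢ)` minus `‖∇L(w)‖²`, exactly as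
`Var X = E X² - (E X)²`. Each `‖aᵢ‖² = ℓ'ᵢ² ‖∇h(w, xᵢ)‖²` is at least `c ℓᵢ m²`.
-/

open Finset

theorem average_norm_sub_average_sq {ι E : Type*} [Fintype ι] [NormedAddCommGroup E]
    [InnerProductSpace ℝ E] (a : ι → E) :
    (1 / Fintype.card ι : ℝ) * ∑ i, ‖a i - (1 / Fintype.card ι : ℝ) • ∑ j, a j‖ ^ 2 =
      (1 / Fintype.card ι : ℝ) * ∑ i, ‖a i‖ ^ 2 -
        ‖(1 / Fintype.card ι : ℝ) • ∑ j, a j‖ ^ 2 := by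
  set N : ℝ := (Fintype.card ι : ℝ)
  set μ : E := (1 / N) • ∑ j, a j
  rcases eq_or_ne N 0 with hN | hN
  · simp [μ, hN]
  have hsum : ∑ j, a j = N • μ := by simp only [μ, smul_smul, mul_one_div_cancel hN, one_smul]
  have hexpand : ∑ i, ‖a i - μ‖ ^ 2 = ∑ i, ‖a i‖ ^ 2 - 2 * N * ‖μ‖ ^ 2 + N * ‖μ‖ ^ 2 := by
    simp only [norm_sub_sq_real, sum_add_distrib, sum_sub_distrib, ← mul_sum, ← sum_inner,
      hsum, real_inner_smul_left, real_inner_self_eq_norm_sq, sum_const, card_univ, nsmul_eq_mul]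
    ring
  rw [hexpand]
  field_simp
  ring

section Gradient

variable {ι F : Type*} [Fintype ι] [NormedAddCommGroup F] [InnerProductSpace ℝ F]
  [CompleteSpace F]

theorem HasDerivAt.comp_hasGradientAt {φ : ℝ → ℝ} {φ' : ℝ} {g : F → ℝ} {g' : F} {w : F}
    (hφ : HasDerivAt φ φ' (g w)) (hg : HasGradientAt g g' w) :
    HasGradientAt (φ ∘ g) (φ' • g') w := by
  rw [hasGradientAt_iff_hasFDerivAt, map_smul]
  exact hφ.comp_hasFDerivAt w hg.hasFDerivAt

theorem hasGradientAt_const_mul_sum_comp (r : ℝ) {φ : ι → ℝ → ℝ} {g : ι → F → ℝ} {w : F}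
    (hφ : ∀ j, DifferentiableAt ℝ (φ j) (g j w)) (hg : ∀ j, DifferentiableAt ℝ (g j) w) :
    HasGradientAt (fun w' => r * ∑ j, φ j (g j w'))
      (r • ∑ j, deriv (φ j) (g j w) • gradient (g j) w) w := by
  rw [hasGradientAt_iff_hasFDerivAt, map_smul, map_sum]
  refine (HasFDerivAt.fun_sum fun j _ => ?_).const_mul r
  rw [← hasGradientAt_iff_hasFDerivAt]
  exact (hφ j).hasDerivAt.comp_hasGradientAt (hg j).hasGradientAt

end Gradient

theorem mul_sq_mul_le_norm_smul_sq {E : Type*} [NormedAddCommGroup E] [NormedSpace ℝ E]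
    {c ℓ d m : ℝ} {v : E} (hself : c * ℓ ≤ d ^ 2) (hm : 0 ≤ m) (hmv : m ≤ ‖v‖) :
    c * m ^ 2 * ℓ ≤ ‖d • v‖ ^ 2 := by
  rw [norm_smul, mul_pow, Real.norm_eq_abs, sq_abs, mul_right_comm]
  exact mul_le_mul hself (pow_le_pow_left₀ hm hmv 2) (sq_nonneg m) (sq_nonneg d)

theorem differentiable_log_one_add_exp_mul (a : ℝ) :
    Differentiable ℝ (fun z : ℝ => Real.log (1 + Real.exp (a * z))) :=
  Differentiable.log (by fun_prop) fun z => by positivity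

theorem sgd_noise_lower_bound_general {p n : ℕ} {D : Type*}
    (h : EuclideanSpace ℝ (Fin p) → D → ℝ)
    (x : Fin n → D) (y : Fin n → ℝ)
    (hdiff : ∀ d, Differentiable ℝ (fun w => h w d))
    (m : ℝ) (hm : 0 ≤ m) (hmlb : ∀ w d, m ≤ ‖gradient (fun w' => h w' d) w‖)
    (c : ℝ)
    (w : EuclideanSpace ℝ (Fin p))
    (hself : ∀ i, c * Real.log (1 + Real.exp (-(y i) * h w (x i))) ≤
      (deriv (fun z : ℝ => Real.log (1 + Real.exp (-(y i) * z))) (h w (x i))) ^ 2) :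
    c * m ^ 2 * ((1 / n : ℝ) * ∑ i, Real.log (1 + Real.exp (-(y i) * h w (x i)))) -
        ‖gradient (fun w' => (1 / n : ℝ) *
          ∑ j, Real.log (1 + Real.exp (-(y j) * h w' (x j)))) w‖ ^ 2
      ≤ (1 / n : ℝ) * ∑ i, ‖(deriv (fun z : ℝ => Real.log (1 + Real.exp (-(y i) * z)))
          (h w (x i))) • gradient (fun w' => h w' (x i)) w -
        gradient (fun w' => (1 / n : ℝ) *
          ∑ j, Real.log (1 + Real.exp (-(y j) * h w' (x j)))) w‖ ^ 2 := by
  have hgrad := hasGradientAt_const_mul_sum_comp (1 / n : ℝ)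
    (φ := fun j z => Real.log (1 + Real.exp (-(y j) * z))) (g := fun j w' => h w' (x j)) (w := w)
    (fun j => (differentiable_log_one_add_exp_mul _).differentiableAt)
    (fun j => (hdiff (x j)).differentiableAt)
  have hvar := average_norm_sub_average_sq fun i =>
    deriv (fun z : ℝ => Real.log (1 + Real.exp (-(y i) * z))) (h w (x i)) •
      gradient (fun w' => h w' (x i)) w
  simp only [Fintype.card_fin] at hvar
  rw [hgrad.gradient, hvar, mul_left_comm, mul_sum]
  gcongr with i
  exact mul_sq_mul_le_norm_smul_sq (hself i) hm (hmlb w (x i))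

/-- Lower bound on the SGD (batch size 1) gradient-noise scale:
if `m ≤ ‖∇_w h(w,x)‖` (with `m ≥ 0`) and `(ℓ')² ≥ c ℓ` along the data, then
`E[‖g(w)‖²] ≥ c m² L(w) − ‖∇L(w)‖²`. -/
theorem sgd_noise_lower_bound {p n : ℕ} {D : Type*} (hn : 0 < n)
    (h : EuclideanSpace ℝ (Fin p) → D → ℝ)
    (x : Fin n → D) (y : Fin n → ℝ) (hy : ∀ i, y i = -1 ∨ y i = 1)
    (hdiff : ∀ d, Differentiable ℝ (fun w => h w d))
    (m : ℝ) (hm : 0 ≤ m) (hmlb : ∀ w d, m ≤ ‖gradient (fun w' => h w' d) w‖)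
    (c : ℝ) (hc : 0 < c)
    (w : EuclideanSpace ℝ (Fin p))
    (hself : ∀ i, c * Real.log (1 + Real.exp (-(y i) * h w (x i))) ≤
      (deriv (fun z : ℝ => Real.log (1 + Real.exp (-(y i) * z))) (h w (x i))) ^ 2) :
    c * m ^ 2 * ((1 / n : ℝ) * ∑ i, Real.log (1 + Real.exp (-(y i) * h w (x i)))) -
        ‖gradient (fun w' => (1 / n : ℝ) *
          ∑ j, Real.log (1 + Real.exp (-(y j) * h w' (x j)))) w‖ ^ 2
      ≤ (1 / n : ℝ) * ∑ i, ‖(deriv (fun z : ℝ => Real.log (1 + Real.exp (-(y i) * z)))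
          (h w (x i))) • gradient (fun w' => h w' (x i)) w -
        gradient (fun w' => (1 / n : ℝ) *
          ∑ j, Real.log (1 + Real.exp (-(y j) * h w' (x j)))) w‖ ^ 2 :=
  sgd_noise_lower_bound_general h x y hdiff m hm hmlb c w hself
end

section
/- Let f : ℝᵖ \ {0} → ℝ be scale-invariant and differentiable. Consider the weight decay gradient step w⁺ = (1 − ηλ) w − η ∇f(w) with 0 < ηλ < 1. Then the normalized iterate satisfies w⁺/‖w⁺‖ = Π_S(w/‖w‖ − η_eff ∇f(w/‖w‖)) where Π_S(v) = v/‖v‖ and η_eff = η / ((1 − ηλ) ‖w‖²). -/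
/-!
Scale invariance makes `∇f` homogeneous of degree `-1` on `w ≠ 0`, so
`∇f(w/‖w‖) = ‖w‖ ∇f(w)`. Hence the gradient step on `w/‖w‖` with rate `η_eff` equals
`((1 - ηλ)‖w‖)⁻¹ • w⁺`, a positive multiple of `w⁺`, and radial projection forgets
positive factors.
-/

section ScaleInvariant

variable {E : Type*} [NormedAddCommGroup E]

theorem inv_norm_smul_smul_of_pos [NormedSpace ℝ E] {c : ℝ} (hc : 0 < c) (u : E) :
    ‖c • u‖⁻¹ • (c • u) = ‖u‖⁻¹ • u := by
  rw [norm_smul, Real.norm_of_nonneg hc.le, mul_inv, smul_smul, mul_right_comm,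
    inv_mul_cancel₀ hc.ne', one_mul]

theorem fderiv_eq_smul_fderiv_smul_of_scaleInvariant [NormedSpace ℝ E]
    {F : Type*} [NormedAddCommGroup F] [NormedSpace ℝ F] {f : E → F}
    (hf : ∀ α : ℝ, 0 < α → ∀ w : E, w ≠ 0 → f (α • w) = f w)
    {α : ℝ} (hα : 0 < α) {w : E} (hw : w ≠ 0) :
    fderiv ℝ f w = α • fderiv ℝ f (α • w) := by
  have hgerm : (fun v => f (α • v)) =ᶠ[nhds w] f := by
    filter_upwards [isOpen_compl_singleton.mem_nhds hw] with v hv using hf α hα v hv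
  rw [← hgerm.fderiv_eq, fderiv_comp_smul]

theorem gradient_smul_of_scaleInvariant [InnerProductSpace ℝ E] [CompleteSpace E]
    {f : E → ℝ} (hf : ∀ α : ℝ, 0 < α → ∀ w : E, w ≠ 0 → f (α • w) = f w)
    {α : ℝ} (hα : 0 < α) {w : E} (hw : w ≠ 0) :
    gradient f (α • w) = α⁻¹ • gradient f w := by
  rw [gradient, gradient, fderiv_eq_smul_fderiv_smul_of_scaleInvariant hf hα hw, map_smul,
    inv_smul_smul₀ hα.ne']

end ScaleInvariant

theorem weight_decay_effective_lr_general {p : ℕ}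
    (f : EuclideanSpace ℝ (Fin p) → ℝ)
    (hsc : ∀ α : ℝ, 0 < α → ∀ w : EuclideanSpace ℝ (Fin p), w ≠ 0 → f (α • w) = f w)
    (η lam : ℝ) (hel1 : η * lam < 1)
    (w : EuclideanSpace ℝ (Fin p)) (hw : w ≠ 0) :
    ‖(1 - η * lam) • w - η • gradient f w‖⁻¹ • ((1 - η * lam) • w - η • gradient f w) =
      (fun v : EuclideanSpace ℝ (Fin p) => ‖v‖⁻¹ • v)
        ((‖w‖⁻¹ • w) - (η / ((1 - η * lam) * ‖w‖ ^ 2)) • gradient f (‖w‖⁻¹ • w)) := by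
  have hnorm : 0 < ‖w‖ := norm_pos_iff.mpr hw
  have hdecay : 0 < 1 - η * lam := by linarith
  have hgrad : gradient f (‖w‖⁻¹ • w) = ‖w‖ • gradient f w := by
    rw [gradient_smul_of_scaleInvariant hsc (inv_pos.mpr hnorm) hw, inv_inv]
  have hstep : ‖w‖⁻¹ • w - (η / ((1 - η * lam) * ‖w‖ ^ 2)) • gradient f (‖w‖⁻¹ • w)
      = ((1 - η * lam) * ‖w‖)⁻¹ • ((1 - η * lam) • w - η • gradient f w) := by
    rw [hgrad]
    match_scalars <;> field_simp
  simp only [hstep]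
  exact (inv_norm_smul_smul_of_pos (by positivity) _).symm

/-- Weight decay acts as an effective learning rate for scale-invariant
functions: the normalized iterate of the weight decay gradient step
`w⁺ = (1−ηλ)w − η∇f(w)` equals the radial projection onto the sphere of a
gradient step on the normalized iterate with learning rate
`η_eff = η / ((1−ηλ)‖w‖²)`. -/
theorem weight_decay_effective_lr {p : ℕ}
    (f : EuclideanSpace ℝ (Fin p) → ℝ)
    (hsc : ∀ α : ℝ, 0 < α → ∀ w : EuclideanSpace ℝ (Fin p), w ≠ 0 → f (α • w) = f w)
    (hdiff : ∀ w : EuclideanSpace ℝ (Fin p), w ≠ 0 → DifferentiableAt ℝ f w)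
    (η lam : ℝ) (hη : 0 < η) (hel : 0 < η * lam) (hel1 : η * lam < 1)
    (w : EuclideanSpace ℝ (Fin p)) (hw : w ≠ 0) :
    ‖(1 - η * lam) • w - η • gradient f w‖⁻¹ • ((1 - η * lam) • w - η • gradient f w) =
      (fun v : EuclideanSpace ℝ (Fin p) => ‖v‖⁻¹ • v)
        ((‖w‖⁻¹ • w) - (η / ((1 - η * lam) * ‖w‖ ^ 2)) • gradient f (‖w‖⁻¹ • w)) :=
  weight_decay_effective_lr_general f hsc η lam hel1 w hw
end
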